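/- Almost-orthogonality estimate for the selected family: let U be a weight on ℝ², W = M_{Σ_N} U, and let R_{β_1}, …, R_{β_m} be rectangles oriented along directions of Σ_N satisfying the selection condition Σ_{k<j} |R_{β_k} ∩ R_{β_j}| ≤ (1/2)|R_{β_j}|. Then ∫_{ℝ²} (Σ_{j=1}^m (U(R_{β_j}^*)/|R_{β_j}|) 𝟙_{R_{β_j}}(y))² W(y)^{−1} dy ≤ 50 Σ_{j=1}^m U(R_{β_j}^*). -/
import Mathlib


open MeasureTheory Set Real
open scoped ENNReal Pointwise

noncomputable section

/-- A cube (square) in the plane with sides parallel to the axes. -/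
def IsCube2 (Q : Set (ℝ × ℝ)) : Prop :=
  ∃ a b r : ℝ, 0 < r ∧ Q = Ioo a (a + r) ×ˢ Ioo b (b + r)

/-- The Hardy–Littlewood maximal operator over cubes in the plane. -/
def MHL2 (f : ℝ × ℝ → ℝ) (x : ℝ × ℝ) : ℝ≥0∞ :=
  ⨆ (Q : Set (ℝ × ℝ)) (_ : IsCube2 Q ∧ x ∈ Q),
    (∫⁻ y in Q, ENNReal.ofReal |f y|) / volume Q

/-- The open rectangle with center `c`, long direction `v`, short side `l` and
long side `L`. -/
def dirRect (v c : ℝ × ℝ) (l L : ℝ) : Set (ℝ × ℝ) :=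
  {x | |(x.1 - c.1) * v.1 + (x.2 - c.2) * v.2| < L / 2 ∧
       |(x.2 - c.2) * v.1 - (x.1 - c.1) * v.2| < l / 2}


lemma isOpen_dirRect (v c : ℝ × ℝ) (l L : ℝ) : IsOpen (dirRect v c l L) := by
  have h1 : IsOpen {x : ℝ × ℝ | |(x.1 - c.1) * v.1 + (x.2 - c.2) * v.2| < L / 2} :=
    isOpen_lt (by fun_prop) continuous_const
  have h2 : IsOpen {x : ℝ × ℝ | |(x.2 - c.2) * v.1 - (x.1 - c.1) * v.2| < l / 2} :=
    isOpen_lt (by fun_prop) continuous_const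
  rw [dirRect, Set.setOf_and]
  exact h1.inter h2

lemma mem_center_dirRect (v c : ℝ × ℝ) {l L : ℝ} (hl : 0 < l) (hL : 0 < L) :
    c ∈ dirRect v c l L := by
  simp only [dirRect, Set.mem_setOf_eq, sub_self, zero_mul, add_zero, sub_zero, abs_zero]
  constructor <;> linarith

lemma dirRect_subset_star (v c : ℝ × ℝ) {l L : ℝ} (hl : 0 < l) (hL : 0 < L) :
    dirRect v c l L ⊆ dirRect v c (5 * l) (5 * L) := by
  rintro x ⟨h1, h2⟩
  exact ⟨by rw [mul_div_assoc]; linarith, by rw [mul_div_assoc]; linarith⟩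

lemma dirRect_vadd (v c : ℝ × ℝ) (l L : ℝ) :
    dirRect v c l L = c +ᵥ dirRect v 0 l L := by
  ext x
  rw [Set.mem_vadd_set_iff_neg_vadd_mem]
  simp only [dirRect, Set.mem_setOf_eq, vadd_eq_add, Prod.fst_add, Prod.snd_add, Prod.fst_neg,
    Prod.snd_neg, Prod.fst_zero, Prod.snd_zero, sub_zero]
  rw [show -c.1 + x.1 = x.1 - c.1 from by ring, show -c.2 + x.2 = x.2 - c.2 from by ring]

lemma dirRect_smul (v : ℝ × ℝ) (l L : ℝ) :
    dirRect v 0 (5 * l) (5 * L) = (5 : ℝ) • dirRect v 0 l L := by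
  ext x
  simp only [dirRect, Set.mem_setOf_eq, Prod.fst_zero, Prod.snd_zero, sub_zero]
  rw [Set.mem_smul_set]
  constructor
  · rintro ⟨h1, h2⟩
    refine ⟨(5 : ℝ)⁻¹ • x, ⟨?_, ?_⟩, by rw [smul_inv_smul₀ (by norm_num : (5:ℝ) ≠ 0)]⟩
    · simp only [Prod.smul_fst, Prod.smul_snd, smul_eq_mul]
      rw [show 5⁻¹ * x.1 * v.1 + 5⁻¹ * x.2 * v.2 = 5⁻¹ * (x.1 * v.1 + x.2 * v.2) by ring,
        abs_mul, abs_of_pos (by norm_num : (0:ℝ) < (5:ℝ)⁻¹)]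
      rw [mul_div_assoc] at h1; linarith
    · simp only [Prod.smul_fst, Prod.smul_snd, smul_eq_mul]
      rw [show 5⁻¹ * x.2 * v.1 - 5⁻¹ * x.1 * v.2 = 5⁻¹ * (x.2 * v.1 - x.1 * v.2) by ring,
        abs_mul, abs_of_pos (by norm_num : (0:ℝ) < (5:ℝ)⁻¹)]
      rw [mul_div_assoc] at h2; linarith
  · rintro ⟨y, ⟨h1, h2⟩, rfl⟩
    simp only [Prod.smul_fst, Prod.smul_snd, smul_eq_mul]
    constructor
    · rw [show 5 * y.1 * v.1 + 5 * y.2 * v.2 = 5 * (y.1 * v.1 + y.2 * v.2) by ring, abs_mul,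
        abs_of_pos (by norm_num : (0:ℝ) < 5), mul_div_assoc]
      linarith
    · rw [show 5 * y.2 * v.1 - 5 * y.1 * v.2 = 5 * (y.2 * v.1 - y.1 * v.2) by ring, abs_mul,
        abs_of_pos (by norm_num : (0:ℝ) < 5), mul_div_assoc]
      linarith

lemma volume_dirRect_star (v c : ℝ × ℝ) (l L : ℝ) :
    volume (dirRect v c (5 * l) (5 * L)) = 25 * volume (dirRect v c l L) := by
  rw [dirRect_vadd v c l L, dirRect_vadd v c (5 * l) (5 * L), measure_vadd, measure_vadd,
    dirRect_smul, Measure.addHaar_smul]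
  have h2 : Module.finrank ℝ (ℝ × ℝ) = 2 := by
    simp [Module.finrank_prod]
  rw [h2]
  norm_num

lemma dirRect_subset_box (v c : ℝ × ℝ) {l L : ℝ} (hvunit : v.1 ^ 2 + v.2 ^ 2 = 1)
    (hl : 0 < l) (hL : 0 < L) :
    dirRect v c l L ⊆ Icc (c.1 - (L + l)) (c.1 + (L + l)) ×ˢ Icc (c.2 - (L + l)) (c.2 + (L + l)) := by
  rintro x ⟨h1, h2⟩
  set p := (x.1 - c.1) * v.1 + (x.2 - c.2) * v.2 with hp
  set q := (x.2 - c.2) * v.1 - (x.1 - c.1) * v.2 with hq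
  have hv1 : |v.1| ≤ 1 := abs_le_one_iff_mul_self_le_one.mpr (by nlinarith [sq_nonneg v.2])
  have hv2 : |v.2| ≤ 1 := abs_le_one_iff_mul_self_le_one.mpr (by nlinarith [sq_nonneg v.1])
  have e1 : x.1 - c.1 = p * v.1 - q * v.2 := by rw [hp, hq]; linear_combination (-(x.1 - c.1)) * hvunit
  have e2 : x.2 - c.2 = p * v.2 + q * v.1 := by rw [hp, hq]; linear_combination (-(x.2 - c.2)) * hvunit
  have b1 : |x.1 - c.1| ≤ L + l := by
    rw [e1]
    have t1 : |p * v.1| ≤ |p| := by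
      rw [abs_mul]; exact mul_le_of_le_one_right (abs_nonneg _) hv1
    have t2 : |q * v.2| ≤ |q| := by
      rw [abs_mul]; exact mul_le_of_le_one_right (abs_nonneg _) hv2
    calc |p * v.1 - q * v.2| ≤ |p * v.1| + |q * v.2| := abs_sub _ _
      _ ≤ L + l := by linarith
  have b2 : |x.2 - c.2| ≤ L + l := by
    rw [e2]
    have t1 : |p * v.2| ≤ |p| := by
      rw [abs_mul]; exact mul_le_of_le_one_right (abs_nonneg _) hv2
    have t2 : |q * v.1| ≤ |q| := by
      rw [abs_mul]; exact mul_le_of_le_one_right (abs_nonneg _) hv1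
    calc |p * v.2 + q * v.1| ≤ |p * v.2| + |q * v.1| := abs_add_le _ _
      _ ≤ L + l := by linarith
  rw [abs_le] at b1 b2
  constructor <;> rw [Set.mem_Icc] <;> constructor <;> linarith [b1.1, b1.2, b2.1, b2.2]


lemma core_bound {m : ℕ} (W : ℝ × ℝ → ℝ≥0∞) (R : Fin m → Set (ℝ × ℝ)) (u : Fin m → ℝ≥0∞)
    (hRmeas : ∀ j, MeasurableSet (R j))
    (hV0 : ∀ j, volume (R j) ≠ 0) (hVtop : ∀ j, volume (R j) ≠ ⊤)
    (hW : ∀ j, ∀ y ∈ R j, u j / (25 * volume (R j)) ≤ W y)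
    (hsel : ∀ j : Fin m,
      ∑ k ∈ Finset.univ.filter fun k : Fin m => (k : ℕ) < (j : ℕ),
          volume (R k ∩ R j) ≤ 2⁻¹ * volume (R j)) :
    (∫⁻ y, (∑ j, (u j / volume (R j)) * (R j).indicator (fun _ => (1 : ℝ≥0∞)) y) ^ 2 *
        (W y)⁻¹) ≤ 50 * ∑ j, u j := by
  classical
  set a : Fin m → ℝ≥0∞ := fun j => u j / volume (R j) with ha
  set C : Fin m → Fin m → ℝ≥0∞ :=
    fun j k => a j * a k * (25 * volume (R (min j k)) / u (min j k)) with hC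
  have key : ∀ i, a i * (25 * volume (R i) / u i) ≤ 25 := by
    intro i
    by_cases h0 : u i = 0
    · simp [ha, h0]
    by_cases htop : u i = ⊤
    · simp [ha, htop, ENNReal.div_top, ENNReal.top_div,
        ENNReal.div_eq_top, hV0 i, hVtop i]
    · have : a i * (25 * volume (R i) / u i)
          = 25 * (u i * (u i)⁻¹) * (volume (R i) * (volume (R i))⁻¹) := by
        rw [ha]
        simp only [div_eq_mul_inv]
        ring
      rw [this, ENNReal.mul_inv_cancel h0 htop, ENNReal.mul_inv_cancel (hV0 i) (hVtop i),
        mul_one, mul_one]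
  have key2 : ∀ j, a j * volume (R j) = u j := fun j =>
    ENNReal.div_mul_cancel (hV0 j) (hVtop j)
  -- pointwise bound
  have hpt : ∀ y, (∑ j, a j * (R j).indicator (fun _ => (1 : ℝ≥0∞)) y) ^ 2 * (W y)⁻¹
      ≤ ∑ j, ∑ k, (R j ∩ R k).indicator (fun _ => C j k) y := by
    intro y
    rw [sq, Finset.sum_mul_sum, Finset.sum_mul]
    refine Finset.sum_le_sum fun j _ => ?_
    rw [Finset.sum_mul]
    refine Finset.sum_le_sum fun k _ => ?_
    by_cases hy : y ∈ R j ∩ R k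
    · rw [Set.indicator_of_mem hy]
      obtain ⟨hyj, hyk⟩ := hy
      rw [Set.indicator_of_mem hyj, Set.indicator_of_mem hyk, mul_one, mul_one]
      refine mul_le_mul_right ?_ _
      have hymin : y ∈ R (min j k) := by
        rcases min_cases j k with ⟨h, _⟩ | ⟨h, _⟩ <;> rw [h] <;> assumption
      have h1 := hW (min j k) y hymin
      calc (W y)⁻¹ ≤ (u (min j k) / (25 * volume (R (min j k))))⁻¹ :=
            ENNReal.inv_le_inv.mpr h1
        _ = 25 * volume (R (min j k)) / u (min j k) :=
            ENNReal.inv_div (Or.inl (ENNReal.mul_ne_top (by norm_num) (hVtop _)))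
              (Or.inl (mul_ne_zero (by norm_num) (hV0 _)))
    · rw [Set.indicator_of_notMem hy]
      rcases not_and_or.mp (by simpa [Set.mem_inter_iff] using hy) with h | h <;>
        simp [Set.indicator_of_notMem h]
  have hCle : ∀ j k : Fin m, (k : ℕ) ≤ (j : ℕ) → C j k ≤ 25 * a j := by
    intro j k hkj
    have hmin : min j k = k := min_eq_right (Fin.le_def.mpr hkj)
    simp only [hC]
    rw [show j ⊓ k = k from hmin]
    calc a j * a k * (25 * volume (R k) / u k)
        = a j * (a k * (25 * volume (R k) / u k)) := by ring
      _ ≤ a j * 25 := mul_le_mul_right (key k) _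
      _ = 25 * a j := mul_comm _ _
  have hCle' : ∀ j k : Fin m, (j : ℕ) ≤ (k : ℕ) → C j k ≤ 25 * a k := by
    intro j k hjk
    have hmin : min j k = j := min_eq_left (Fin.le_def.mpr hjk)
    simp only [hC]
    rw [show j ⊓ k = j from hmin]
    calc a j * a k * (25 * volume (R j) / u j)
        = a k * (a j * (25 * volume (R j) / u j)) := by ring
      _ ≤ a k * 25 := mul_le_mul_right (key j) _
      _ = 25 * a k := mul_comm _ _
  calc (∫⁻ y, (∑ j, a j * (R j).indicator (fun _ => (1 : ℝ≥0∞)) y) ^ 2 * (W y)⁻¹)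
      ≤ ∫⁻ y, ∑ j, ∑ k, (R j ∩ R k).indicator (fun _ => C j k) y := lintegral_mono hpt
    _ = ∑ j, ∑ k, C j k * volume (R j ∩ R k) := by
        have hm : ∀ j k : Fin m,
            Measurable fun y => (R j ∩ R k).indicator (fun _ => C j k) y :=
          fun j k => measurable_const.indicator ((hRmeas j).inter (hRmeas k))
        have hm1 : ∀ j : Fin m,
            Measurable fun y => ∑ k, (R j ∩ R k).indicator (fun _ => C j k) y :=
          fun j => Finset.measurable_sum _ fun k _ => hm j k
        rw [lintegral_finset_sum _ fun j _ => hm1 j]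
        refine Finset.sum_congr rfl fun j _ => ?_
        rw [lintegral_finset_sum _ fun k _ => hm j k]
        exact Finset.sum_congr rfl fun k _ =>
          lintegral_indicator_const ((hRmeas j).inter (hRmeas k)) _
    _ ≤ ∑ j : Fin m, ∑ k : Fin m, ((if (k : ℕ) < (j : ℕ) then 25 * a j * volume (R k ∩ R j) else 0)
          + (if (j : ℕ) < (k : ℕ) then 25 * a k * volume (R j ∩ R k) else 0)
          + (if j = k then 25 * a j * volume (R j ∩ R k) else 0)) := by
        refine Finset.sum_le_sum fun j _ => Finset.sum_le_sum fun k _ => ?_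
        rcases lt_trichotomy (j : ℕ) (k : ℕ) with h | h | h
        · have hne : j ≠ k := fun e => by simp [e] at h
          simp only [if_pos h, if_neg (not_lt_of_gt h), if_neg hne, zero_add, add_zero]
          exact mul_le_mul_left (hCle' j k h.le) _
        · have he : j = k := Fin.ext h
          simp only [if_neg (by omega : ¬ (k:ℕ) < (j:ℕ)), if_neg (by omega : ¬ (j:ℕ) < (k:ℕ)),
            if_pos he, zero_add]
          exact mul_le_mul_left (hCle j k h.ge) _
        · have hne : j ≠ k := fun e => by simp [e] at h
          simp only [if_pos h, if_neg (not_lt_of_gt h), if_neg hne, add_zero]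
          rw [Set.inter_comm (R k) (R j)]
          exact mul_le_mul_left (hCle j k h.le) _
    _ = (∑ j : Fin m, ∑ k : Fin m, (if (k : ℕ) < (j : ℕ) then 25 * a j * volume (R k ∩ R j) else 0))
          + (∑ j : Fin m, ∑ k : Fin m, (if (j : ℕ) < (k : ℕ) then 25 * a k * volume (R j ∩ R k) else 0))
          + (∑ j : Fin m, ∑ k : Fin m, (if j = k then 25 * a j * volume (R j ∩ R k) else 0)) := by
        simp [Finset.sum_add_distrib]
    _ ≤ (∑ j, 25 * 2⁻¹ * u j) + (∑ j, 25 * 2⁻¹ * u j) + (∑ j, 25 * u j) := by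
        have hA : (∑ j : Fin m, ∑ k : Fin m, (if (k : ℕ) < (j : ℕ) then 25 * a j * volume (R k ∩ R j) else 0))
            ≤ ∑ j, 25 * 2⁻¹ * u j := by
          refine Finset.sum_le_sum fun j _ => ?_
          calc (∑ k : Fin m, if (k : ℕ) < (j : ℕ) then 25 * a j * volume (R k ∩ R j) else 0)
              = ∑ k ∈ Finset.univ.filter fun k : Fin m => (k : ℕ) < (j : ℕ),
                  25 * a j * volume (R k ∩ R j) := (Finset.sum_filter _ _).symm
            _ = 25 * a j * ∑ k ∈ Finset.univ.filter fun k : Fin m => (k : ℕ) < (j : ℕ),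
                  volume (R k ∩ R j) := by rw [Finset.mul_sum]
            _ ≤ 25 * a j * (2⁻¹ * volume (R j)) := mul_le_mul_right (hsel j) _
            _ = 25 * 2⁻¹ * (a j * volume (R j)) := by ring
            _ = 25 * 2⁻¹ * u j := by rw [key2 j]
        have hB : (∑ j : Fin m, ∑ k : Fin m, (if (j : ℕ) < (k : ℕ) then 25 * a k * volume (R j ∩ R k) else 0))
            ≤ ∑ j, 25 * 2⁻¹ * u j := by
          rw [Finset.sum_comm]
          refine Finset.sum_le_sum fun j _ => ?_
          calc (∑ k : Fin m, if (k : ℕ) < (j : ℕ) then 25 * a j * volume (R k ∩ R j) else 0)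
              = ∑ k ∈ Finset.univ.filter fun k : Fin m => (k : ℕ) < (j : ℕ),
                  25 * a j * volume (R k ∩ R j) := (Finset.sum_filter _ _).symm
            _ = 25 * a j * ∑ k ∈ Finset.univ.filter fun k : Fin m => (k : ℕ) < (j : ℕ),
                  volume (R k ∩ R j) := by rw [Finset.mul_sum]
            _ ≤ 25 * a j * (2⁻¹ * volume (R j)) := mul_le_mul_right (hsel j) _
            _ = 25 * 2⁻¹ * (a j * volume (R j)) := by ring
            _ = 25 * 2⁻¹ * u j := by rw [key2 j]
        have hD : (∑ j : Fin m, ∑ k : Fin m, (if j = k then 25 * a j * volume (R j ∩ R k) else 0))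
            ≤ ∑ j, 25 * u j := by
          refine Finset.sum_le_sum fun j _ => ?_
          rw [Finset.sum_ite_eq]
          simp only [Finset.mem_univ, if_pos, Set.inter_self, mul_assoc, key2 j, le_refl]
        exact add_le_add (add_le_add hA hB) hD
    _ = 50 * ∑ j, u j := by
        rw [← Finset.sum_add_distrib, ← Finset.sum_add_distrib, Finset.mul_sum]
        refine Finset.sum_congr rfl fun j _ => ?_
        rw [show 25 * 2⁻¹ * u j + 25 * 2⁻¹ * u j + 25 * u j
            = 25 * ((2⁻¹ + 2⁻¹) * u j) + 25 * u j by ring,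
          ENNReal.inv_two_add_inv_two, one_mul]
        rw [show (50 : ℝ≥0∞) = 25 + 25 by norm_num, add_mul]

/-- The set of `N` uniformly spread unit vectors on the circle. -/
def SigmaN (N : ℕ) : Set (ℝ × ℝ) :=
  {v | ∃ j < N, v = (Real.cos (2 * π * j / N), Real.sin (2 * π * j / N))}

/-- Rectangles whose longest side is parallel to a direction in `Σ_N`. -/
def IsDirRect (N : ℕ) (R : Set (ℝ × ℝ)) : Prop :=
  ∃ v ∈ SigmaN N, ∃ c : ℝ × ℝ, ∃ l L : ℝ, 0 < l ∧ l ≤ L ∧ R = dirRect v c l L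

/-- The directional maximal operator associated with `Σ_N`. -/
def MSig (N : ℕ) (f : ℝ × ℝ → ℝ) (x : ℝ × ℝ) : ℝ≥0∞ :=
  ⨆ (R : Set (ℝ × ℝ)) (_ : IsDirRect N R ∧ x ∈ R),
    (∫⁻ y in R, ENNReal.ofReal |f y|) / volume R

/-- The directional maximal operator acting on `ℝ≥0∞`-valued functions. -/
def MSigE (N : ℕ) (g : ℝ × ℝ → ℝ≥0∞) (x : ℝ × ℝ) : ℝ≥0∞ :=
  ⨆ (R : Set (ℝ × ℝ)) (_ : IsDirRect N R ∧ x ∈ R),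
    (∫⁻ y in R, g y) / volume R

/-- Almost-orthogonality estimate for the selected family of directional
rectangles, with `W = M_{Σ_N} U`. -/
theorem almost_orthogonality (N m : ℕ) (U : ℝ × ℝ → ℝ)
    (hU : ∀ x, 0 ≤ U x) (hUloc : LocallyIntegrable U volume)
    (v : Fin m → ℝ × ℝ) (hv : ∀ j, v j ∈ SigmaN N)
    (c : Fin m → ℝ × ℝ) (l L : Fin m → ℝ)
    (hl : ∀ j, 0 < l j) (hlL : ∀ j, l j ≤ L j)
    (R Rstar : Fin m → Set (ℝ × ℝ))
    (hR : ∀ j, R j = dirRect (v j) (c j) (l j) (L j))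
    (hRstar : ∀ j, Rstar j = dirRect (v j) (c j) (5 * l j) (5 * L j))
    (hsel : ∀ j : Fin m,
      ∑ k ∈ Finset.univ.filter fun k : Fin m => (k : ℕ) < (j : ℕ),
          volume (R k ∩ R j) ≤ 2⁻¹ * volume (R j)) :
    (∫⁻ y,
        (∑ j, ((∫⁻ x in Rstar j, ENNReal.ofReal (U x)) / volume (R j)) *
            (R j).indicator (fun _ => (1 : ℝ≥0∞)) y) ^ 2 *
          (MSig N U y)⁻¹) ≤
      50 * ∑ j, ∫⁻ x in Rstar j, ENNReal.ofReal (U x) := by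
  have hvunit : ∀ j, (v j).1 ^ 2 + (v j).2 ^ 2 = 1 := by
    intro j
    obtain ⟨i, hi, he⟩ := hv j
    rw [he]
    simpa using Real.cos_sq_add_sin_sq (2 * π * i / N)
  have hL : ∀ j, 0 < L j := fun j => lt_of_lt_of_le (hl j) (hlL j)
  have hRmeas : ∀ j, MeasurableSet (R j) := fun j => by
    rw [hR]; exact (isOpen_dirRect _ _ _ _).measurableSet
  have hV0 : ∀ j, volume (R j) ≠ 0 := by
    intro j
    rw [hR]
    exact ((isOpen_dirRect _ _ _ _).measure_pos volume
      ⟨c j, mem_center_dirRect _ _ (hl j) (hL j)⟩).ne'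
  have hVtop : ∀ j, volume (R j) ≠ ⊤ := by
    intro j
    rw [hR]
    refine ne_top_of_le_ne_top ((isCompact_Icc.prod isCompact_Icc).measure_lt_top).ne
      (measure_mono (dirRect_subset_box _ _ (hvunit j) (hl j) (hL j)))
  have hstar25 : ∀ j, volume (Rstar j) = 25 * volume (R j) := fun j => by
    rw [hRstar, hR]; exact volume_dirRect_star _ _ _ _
  have hW : ∀ j, ∀ y ∈ R j,
      (∫⁻ x in Rstar j, ENNReal.ofReal (U x)) / (25 * volume (R j)) ≤ MSig N U y := by
    intro j y hy
    have hsub : R j ⊆ Rstar j := by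
      rw [hR, hRstar]; exact dirRect_subset_star _ _ (hl j) (hL j)
    have hdir : IsDirRect N (Rstar j) :=
      ⟨v j, hv j, c j, 5 * l j, 5 * L j, by linarith [hl j], by linarith [hlL j], hRstar j⟩
    have habs : (∫⁻ x in Rstar j, ENNReal.ofReal |U x|)
        = ∫⁻ x in Rstar j, ENNReal.ofReal (U x) := by
      refine lintegral_congr fun x => ?_
      rw [abs_of_nonneg (hU x)]
    calc (∫⁻ x in Rstar j, ENNReal.ofReal (U x)) / (25 * volume (R j))
        = (∫⁻ x in Rstar j, ENNReal.ofReal |U x|) / volume (Rstar j) := by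
          rw [habs, hstar25 j]
      _ ≤ MSig N U y := by
          unfold MSig
          exact le_iSup₂_of_le (Rstar j) ⟨hdir, hsub hy⟩ le_rfl
  exact core_bound (MSig N U) R (fun j => ∫⁻ x in Rstar j, ENNReal.ofReal (U x))
    hRmeas hV0 hVtop hW hsel
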